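/- Let p, q ∈ (0,∞), let σ, ω be locally finite Borel measures on ℝ^d, and let {λ_Q} be a family of non-negative reals indexed by dyadic cubes. Set ρ_Q := ∑_{R ⊆ Q} λ_R 1_R. Then the inequality ‖∑_Q λ_Q a_Q 1_Q‖_{L^q(ω)} ≤ C ‖sup_Q a_Q 1_Q‖_{L^p(σ)} holds for all non-negative families {a_Q} if and only if the inequality ‖∑_Q ρ_Q b_Q 1_Q‖_{L^q(ω)} ≤ C ‖∑_Q b_Q 1_Q‖_{L^p(σ)} holds for all non-negative families {b_Q}, with the same constant C. -/

import Mathlib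

open MeasureTheory ENNReal Filter
open scoped NNReal ENNReal

/-- A dyadic cube `2^k([0,1)^d + j)` in `ℝ^d`. -/
structure DyadicCube (d : ℕ) where
  k : ℤ
  j : Fin d → ℤ

/-- The underlying set of a dyadic cube. -/
def DyadicCube.toSet {d : ℕ} (Q : DyadicCube d) : Set (Fin d → ℝ) :=
  {x | ∀ i, (2:ℝ) ^ Q.k * (Q.j i) ≤ x i ∧ x i < (2:ℝ) ^ Q.k * (Q.j i + 1)}

/-!
Write `B_R = ∑_{Q ⊇ R} b_Q`. Exchanging the sums gives `∑_Q ρ_Q b_Q 1_Q = ∑_R λ_R B_R 1_R`, so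
sum-testing with `b` is sup-testing with `a = B`, and `sup_Q B_Q 1_Q ≤ ∑_Q b_Q 1_Q` pointwise.
Conversely, for `a` living on the levels `m ≤ k ≤ n`, let `A_Q` be the supremum of `a` over the
ancestors of `Q` of level at most `n` and `b_Q = A_Q - A_{parent Q}`. Along the chain of cubes
containing a point these increments telescope, so `B_R ≥ A_R ≥ a_R` while
`∑_Q b_Q 1_Q ≤ sup_Q a_Q 1_Q`. Monotone convergence removes the restriction on levels and passes
between finite and `∞`-valued families.
-/

theorem ENNReal.tsum_iSup_of_monotone {ι κ : Type*} [Preorder κ] [IsDirectedOrder κ]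
    {f : κ → ι → ℝ≥0∞} (hf : Monotone f) : ∑' i, ⨆ n, f n i = ⨆ n, ∑' i, f n i := by
  simp only [ENNReal.tsum_eq_iSup_sum]
  rw [iSup_comm]
  exact iSup_congr fun s => ENNReal.finsetSum_iSup_of_monotone fun i _ _ h => hf h i

theorem ENNReal.tsum_subtype_comm {α β : Type*} (r : α → β → Prop) (f : α → β → ℝ≥0∞) :
    ∑' a, ∑' b : {b // r a b}, f a b = ∑' b, ∑' a : {a // r a b}, f a b := by
  calc ∑' a, ∑' b : {b // r a b}, f a b
      = ∑' a, ∑' b, {b | r a b}.indicator (f a) b :=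
        tsum_congr fun a => tsum_subtype {b | r a b} (f a)
    _ = ∑' b, ∑' a, {a | r a b}.indicator (f · b) a := ENNReal.tsum_comm
    _ = ∑' b, ∑' a : {a // r a b}, f a b :=
        tsum_congr fun b => (tsum_subtype {a | r a b} (f · b)).symm

theorem Finset.sum_Ico_tsub_of_antitone {g : ℤ → ℝ≥0∞} (hg : Antitone g) {j l : ℤ}
    (h : j ≤ l) : ∑ k ∈ Finset.Ico j l, (g k - g (k + 1)) = g j - g l := by
  induction l, h using Int.leInduction with
  | base => simp
  | succ l hjl ih =>
    rw [← Finset.insert_Ico_right_eq_Ico_add_one hjl, Finset.sum_insert Finset.right_notMem_Ico,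
      ih, add_comm, tsub_add_tsub_cancel (hg hjl) (hg (Int.le_add_one le_rfl))]

theorem eLpNorm'_iSup_of_monotone {α : Type*} [MeasurableSpace α] {μ : Measure α} {q : ℝ}
    (hq : 0 < q) {f : ℕ → α → ℝ≥0∞} (hf : ∀ n, Measurable (f n)) (hmono : Monotone f) :
    eLpNorm' (fun x => ⨆ n, f n x) q μ = ⨆ n, eLpNorm' (f n) q μ := by
  have hpow : ∀ {t : ℝ} (ht : 0 < t) (g : ℕ → ℝ≥0∞), (⨆ n, g n) ^ t = ⨆ n, g n ^ t :=
    fun ht g => (ENNReal.orderIsoRpow _ ht).map_iSup g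
  simp only [eLpNorm', enorm_eq_self, hpow hq]
  rw [lintegral_iSup (fun n => (hf n).pow_const q)
    (fun m n hmn x => ENNReal.rpow_le_rpow (hmono hmn x) hq.le), hpow (one_div_pos.2 hq)]

theorem le_of_forall_coe_le {ι : Type*} {Φ Ψ : (ι → ℝ≥0∞) → ℝ≥0∞}
    (hΦ : ∀ c : ℕ → ι → ℝ≥0∞, Monotone c → Φ (⨆ n, c n) ≤ ⨆ n, Φ (c n)) (hΨ : Monotone Ψ)
    (h : ∀ a : ι → ℝ≥0, Φ (fun i => a i) ≤ Ψ (fun i => a i)) (a : ι → ℝ≥0∞) : Φ a ≤ Ψ a := by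
  set c : ℕ → ι → ℝ≥0∞ := fun n i => min (a i) n
  have hc : ⨆ n, c n = a := by
    ext i
    simp only [iSup_apply, c]
    exact (inf_iSup_eq (a i) _).symm.trans (by rw [ENNReal.iSup_natCast, inf_top_eq])
  have hc_coe : ∀ n, (fun i => ((c n i).toNNReal : ℝ≥0∞)) = c n := fun n =>
    funext fun i =>
      ENNReal.coe_toNNReal (ne_top_of_le_ne_top (natCast_ne_top n) (min_le_right _ _))
  calc Φ a = Φ (⨆ n, c n) := by rw [hc]
    _ ≤ ⨆ n, Φ (c n) := hΦ c fun m n hmn i => min_le_min le_rfl (Nat.cast_le.2 hmn)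
    _ ≤ Ψ a := iSup_le fun n => by
        rw [← hc_coe n]
        exact (h _).trans (hΨ (by rw [hc_coe n]; exact fun i => min_le_left _ _))

theorem Int.floor_div_two_zpow_of_le (y : ℝ) {k l : ℤ} (h : k ≤ l) :
    ⌊y / 2 ^ l⌋ = ⌊y / 2 ^ k⌋ / 2 ^ (l - k).toNat := by
  have hl : (2 : ℝ) ^ l = 2 ^ k * ((2 ^ (l - k).toNat : ℕ) : ℝ) := by
    rw [Nat.cast_pow, Nat.cast_ofNat, ← zpow_natCast, Int.toNat_of_nonneg (sub_nonneg.2 h),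
      ← zpow_add₀ two_ne_zero, add_sub_cancel]
  rw [hl, ← div_div, Int.floor_div_natCast]
  norm_cast

namespace DyadicCube

variable {d : ℕ}

theorem mem_toSet_iff {Q : DyadicCube d} {x : Fin d → ℝ} :
    x ∈ Q.toSet ↔ ∀ i, ⌊x i / 2 ^ Q.k⌋ = Q.j i := by
  have h2 : (0 : ℝ) < 2 ^ Q.k := zpow_pos two_pos _
  refine forall_congr' fun i => ?_
  rw [Int.floor_eq_iff, le_div_iff₀ h2, div_lt_iff₀ h2, mul_comm, mul_comm (_ + 1 : ℝ)]

theorem toSet_nonempty (Q : DyadicCube d) : Q.toSet.Nonempty :=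
  ⟨fun i => 2 ^ Q.k * Q.j i, mem_toSet_iff.2 fun i => by
    rw [mul_div_cancel_left₀ _ (zpow_ne_zero _ two_ne_zero), Int.floor_intCast]⟩

theorem measurableSet_toSet (Q : DyadicCube d) : MeasurableSet Q.toSet := by
  have : Q.toSet =
      Set.univ.pi fun i => Set.Ico (2 ^ Q.k * Q.j i : ℝ) (2 ^ Q.k * (Q.j i + 1)) := by
    ext x
    simp [toSet, Set.mem_pi]
  rw [this]
  exact .univ_pi fun _ => measurableSet_Ico

instance : Countable (DyadicCube d) :=
  Function.Injective.countable (f := fun Q : DyadicCube d => (Q.k, Q.j)) fun Q R h => by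
    cases Q; cases R; simpa using h

noncomputable def containing (k : ℤ) (x : Fin d → ℝ) : DyadicCube d :=
  ⟨k, fun i => ⌊x i / 2 ^ k⌋⟩

theorem mem_containing (k : ℤ) (x : Fin d → ℝ) : x ∈ (containing k x).toSet :=
  mem_toSet_iff.2 fun _ => rfl

theorem eq_containing_of_mem {Q : DyadicCube d} {x : Fin d → ℝ} (hx : x ∈ Q.toSet) :
    Q = containing Q.k x := by
  cases Q
  simp only [containing, mk.injEq, true_and]
  exact (funext (mem_toSet_iff.1 hx)).symm

theorem containing_injective (x : Fin d → ℝ) : Function.Injective (containing · x) :=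
  fun _ _ h => congrArg DyadicCube.k h

theorem containing_subset_containing {k l : ℤ} (h : k ≤ l) (x : Fin d → ℝ) :
    (containing k x).toSet ⊆ (containing l x).toSet := fun y hy =>
  mem_toSet_iff.2 fun i => by
    simp only [containing]
    rw [Int.floor_div_two_zpow_of_le _ h, Int.floor_div_two_zpow_of_le _ h,
      show ⌊y i / 2 ^ k⌋ = ⌊x i / 2 ^ k⌋ from mem_toSet_iff.1 hy i]

theorem toSet_subset_containing {R : DyadicCube d} {x : Fin d → ℝ} (hx : x ∈ R.toSet) {k : ℤ}
    (hk : R.k ≤ k) : R.toSet ⊆ (containing k x).toSet := by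
  have := containing_subset_containing hk x
  rwa [← eq_containing_of_mem hx] at this

def parent (Q : DyadicCube d) : DyadicCube d := ⟨Q.k + 1, fun i => Q.j i / 2⟩

theorem parent_containing (k : ℤ) (x : Fin d → ℝ) :
    (containing k x).parent = containing (k + 1) x := by
  simp only [parent, containing, mk.injEq, true_and]
  funext i
  rw [Int.floor_div_two_zpow_of_le _ (Int.le_add_one le_rfl), add_sub_cancel_left]
  rfl

noncomputable def indicatorSum (c : DyadicCube d → ℝ≥0∞) (x : Fin d → ℝ) : ℝ≥0∞ :=
  ∑' Q : DyadicCube d, Q.toSet.indicator (fun _ => c Q) x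

noncomputable def indicatorSup (c : DyadicCube d → ℝ≥0∞) (x : Fin d → ℝ) : ℝ≥0∞ :=
  ⨆ Q : DyadicCube d, Q.toSet.indicator (fun _ => c Q) x

noncomputable def ancestorSum (b : DyadicCube d → ℝ≥0∞) (R : DyadicCube d) : ℝ≥0∞ :=
  ∑' Q : {Q : DyadicCube d // R.toSet ⊆ Q.toSet}, b Q

theorem indicatorSum_mono : Monotone (indicatorSum (d := d)) := fun _ _ h _ =>
  ENNReal.tsum_le_tsum fun Q => Set.indicator_le_indicator (h Q)

theorem ancestorSum_mono : Monotone (ancestorSum (d := d)) := fun _ _ h _ =>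
  ENNReal.tsum_le_tsum fun Q => h Q

theorem indicatorSup_mono : Monotone (indicatorSup (d := d)) := fun _ _ h _ =>
  iSup_mono fun Q => Set.indicator_le_indicator (h Q)

theorem measurable_indicatorSum (c : DyadicCube d → ℝ≥0∞) : Measurable (indicatorSum c) :=
  Measurable.tsum fun Q => measurable_const.indicator (measurableSet_toSet Q)

theorem indicatorSum_iSup {c : ℕ → DyadicCube d → ℝ≥0∞} (hc : Monotone c) (x : Fin d → ℝ) :
    indicatorSum (⨆ n, c n) x = ⨆ n, indicatorSum (c n) x := by
  simp only [indicatorSum, iSup_apply]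
  refine (tsum_congr fun Q => ?_).trans (ENNReal.tsum_iSup_of_monotone
    (f := fun n (Q : DyadicCube d) => Q.toSet.indicator (fun _ => c n Q) x)
    fun m n h Q => Set.indicator_le_indicator (hc h Q))
  by_cases hx : x ∈ Q.toSet <;> simp [hx]

theorem eLpNorm'_indicatorSum_mul_iSup {q : ℝ} (hq : 0 < q) (μ : Measure (Fin d → ℝ))
    (lam : DyadicCube d → ℝ≥0∞) {c : ℕ → DyadicCube d → ℝ≥0∞} (hc : Monotone c) :
    eLpNorm' (indicatorSum fun Q => lam Q * (⨆ n, c n) Q) q μ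
      = ⨆ n, eLpNorm' (indicatorSum fun Q => lam Q * c n Q) q μ := by
  have hlc : Monotone fun n Q => lam Q * c n Q := fun m n h Q => mul_le_mul_right (hc h Q) _
  have hsup : (fun Q => lam Q * (⨆ n, c n) Q) = ⨆ n, fun Q => lam Q * c n Q := by
    ext Q
    simp only [iSup_apply, ENNReal.mul_iSup]
  rw [hsup, ← eLpNorm'_iSup_of_monotone hq (fun n => measurable_indicatorSum _)
    fun m n h => indicatorSum_mono (hlc h)]
  exact congrArg (eLpNorm' · q μ) (funext (indicatorSum_iSup hlc))

theorem indicatorSum_eq_tsum_containing (b : DyadicCube d → ℝ≥0∞) (x : Fin d → ℝ) :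
    indicatorSum b x = ∑' k : ℤ, b (containing k x) := by
  rw [indicatorSum, ← (containing_injective x).tsum_eq]
  · exact tsum_congr fun k => Set.indicator_of_mem (mem_containing k x) _
  · intro Q hQ
    exact ⟨Q.k, (eq_containing_of_mem (Set.mem_of_indicator_ne_zero hQ)).symm⟩

theorem le_indicatorSup (a : DyadicCube d → ℝ≥0∞) {Q : DyadicCube d} {x : Fin d → ℝ}
    (hx : x ∈ Q.toSet) : a Q ≤ indicatorSup a x :=
  le_iSup_of_le Q (Set.indicator_of_mem hx (fun _ => a Q)).ge

theorem ancestorSum_le_indicatorSum (b : DyadicCube d → ℝ≥0∞) {R : DyadicCube d}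
    {x : Fin d → ℝ} (hx : x ∈ R.toSet) : ancestorSum b R ≤ indicatorSum b x :=
  calc ancestorSum b R
      = ∑' Q : {Q : DyadicCube d // R.toSet ⊆ Q.toSet},
          Q.1.toSet.indicator (fun _ => b Q) x :=
        tsum_congr fun Q => (Set.indicator_of_mem (Q.2 hx) (fun _ => b Q)).symm
    _ ≤ indicatorSum b x := ENNReal.tsum_comp_le_tsum_of_injective Subtype.val_injective _

theorem indicatorSup_ancestorSum_le (b : DyadicCube d → ℝ≥0∞) (x : Fin d → ℝ) :
    indicatorSup (ancestorSum b) x ≤ indicatorSum b x :=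
  iSup_le fun _ => Set.indicator_apply_le' (ancestorSum_le_indicatorSum b) fun _ => zero_le

theorem sum_containing_le_ancestorSum (b : DyadicCube d → ℝ≥0∞) {R : DyadicCube d}
    {x : Fin d → ℝ} (hx : x ∈ R.toSet) (s : Finset ℤ) (hs : ∀ k ∈ s, R.k ≤ k) :
    ∑ k ∈ s, b (containing k x) ≤ ancestorSum b R :=
  calc ∑ k ∈ s, b (containing k x)
      = ∑ k ∈ s, {Q | R.toSet ⊆ Q.toSet}.indicator b (containing k x) :=
        Finset.sum_congr rfl fun k hk =>
          (Set.indicator_of_mem (toSet_subset_containing hx (hs k hk)) _).symm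
    _ ≤ ∑' k, {Q | R.toSet ⊆ Q.toSet}.indicator b (containing k x) := ENNReal.sum_le_tsum s
    _ ≤ ∑' Q, {Q | R.toSet ⊆ Q.toSet}.indicator b Q :=
        ENNReal.tsum_comp_le_tsum_of_injective (containing_injective x) _
    _ = ancestorSum b R := (tsum_subtype _ _).symm

theorem ancestorSum_iSup {c : ℕ → DyadicCube d → ℝ≥0∞} (hc : Monotone c) :
    ancestorSum (⨆ n, c n) = ⨆ n, ancestorSum (c n) := by
  ext R
  simp only [ancestorSum, iSup_apply]
  exact ENNReal.tsum_iSup_of_monotone fun m n h Q => hc h Q.1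

theorem tsum_indicator_tsum_indicator_mul (lam b : DyadicCube d → ℝ≥0∞) (x : Fin d → ℝ) :
    ∑' Q : DyadicCube d, Q.toSet.indicator
        (fun y => (∑' R : {R : DyadicCube d // R.toSet ⊆ Q.toSet},
          R.1.toSet.indicator (fun _ => lam R.1) y) * b Q) x
      = indicatorSum (fun R => lam R * ancestorSum b R) x := by
  have hQ : ∀ Q : DyadicCube d, Q.toSet.indicator
      (fun y => (∑' R : {R : DyadicCube d // R.toSet ⊆ Q.toSet},
        R.1.toSet.indicator (fun _ => lam R.1) y) * b Q) x
      = ∑' R : {R : DyadicCube d // R.toSet ⊆ Q.toSet},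
        R.1.toSet.indicator (fun _ => lam R.1 * b Q) x := by
    intro Q
    by_cases hx : x ∈ Q.toSet
    · rw [Set.indicator_of_mem hx, ← ENNReal.tsum_mul_right]
      refine tsum_congr fun R => ?_
      by_cases hR : x ∈ R.1.toSet <;> simp [hR]
    · rw [Set.indicator_of_notMem hx]
      exact (ENNReal.tsum_eq_zero.2 fun R =>
        Set.indicator_of_notMem (fun hR => hx (R.2 hR)) _).symm
  rw [tsum_congr hQ]
  refine (ENNReal.tsum_subtype_comm (fun (Q R : DyadicCube d) => R.toSet ⊆ Q.toSet)
    (fun (Q R : DyadicCube d) => R.toSet.indicator (fun _ => lam R * b Q) x)).trans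
    (tsum_congr fun R => ?_)
  by_cases hx : x ∈ R.toSet <;> simp [hx, ancestorSum, ENNReal.tsum_mul_left]

/-- The bound `Q.k ≤ Q'.k` is not implied by `Q.toSet ⊆ Q'.toSet`: for `d = 0` all cubes are
the same point. -/
noncomputable def ancestorSupUpTo (n : ℤ) (a : DyadicCube d → ℝ≥0∞) (Q : DyadicCube d) :
    ℝ≥0∞ :=
  ⨆ Q' : {Q' : DyadicCube d // Q.toSet ⊆ Q'.toSet ∧ Q.k ≤ Q'.k ∧ Q'.k ≤ n}, a Q'

noncomputable def ancestorSupIncrement (m n : ℤ) (a : DyadicCube d → ℝ≥0∞)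
    (Q : DyadicCube d) : ℝ≥0∞ :=
  if m ≤ Q.k then ancestorSupUpTo n a Q - ancestorSupUpTo n a Q.parent else 0

section ancestorSupUpTo

variable {n : ℤ} (a : DyadicCube d → ℝ≥0∞)

theorem le_ancestorSupUpTo {Q : DyadicCube d} (hQ : Q.k ≤ n) : a Q ≤ ancestorSupUpTo n a Q :=
  le_iSup_of_le ⟨Q, subset_rfl, le_rfl, hQ⟩ le_rfl

theorem ancestorSupUpTo_of_lt {Q : DyadicCube d} (hQ : n < Q.k) : ancestorSupUpTo n a Q = 0 :=
  ENNReal.iSup_eq_zero.2 fun Q' => absurd (Q'.2.2.1.trans Q'.2.2.2) hQ.not_ge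

theorem ancestorSupUpTo_le_indicatorSup {Q : DyadicCube d} {x : Fin d → ℝ}
    (hx : x ∈ Q.toSet) : ancestorSupUpTo n a Q ≤ indicatorSup a x :=
  iSup_le fun Q' => le_indicatorSup a (Q'.2.1 hx)

theorem antitone_ancestorSupUpTo_containing (x : Fin d → ℝ) :
    Antitone fun k => ancestorSupUpTo n a (containing k x) := fun _ _ h =>
  iSup_le fun Q' => le_iSup_of_le
    ⟨Q', (containing_subset_containing h x).trans Q'.2.1, h.trans Q'.2.2.1, Q'.2.2.2⟩ le_rfl

theorem sum_ancestorSupIncrement_containing {m j : ℤ} (hmj : m ≤ j) (hjn : j ≤ n + 1)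
    (x : Fin d → ℝ) :
    ∑ k ∈ Finset.Ico j (n + 1), ancestorSupIncrement m n a (containing k x)
      = ancestorSupUpTo n a (containing j x) := by
  have hk : ∀ k ∈ Finset.Ico j (n + 1), ancestorSupIncrement m n a (containing k x)
      = ancestorSupUpTo n a (containing k x) - ancestorSupUpTo n a (containing (k + 1) x) :=
    fun k hk => by
      rw [ancestorSupIncrement, parent_containing,
        if_pos (show m ≤ (containing k x).k from hmj.trans (Finset.mem_Ico.1 hk).1)]
  rw [Finset.sum_congr rfl hk,
    Finset.sum_Ico_tsub_of_antitone (antitone_ancestorSupUpTo_containing a x) hjn,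
    ancestorSupUpTo_of_lt a (Q := containing (n + 1) x) (lt_add_one n), tsub_zero]

theorem le_ancestorSum_ancestorSupIncrement (m : ℤ) {R : DyadicCube d} (hm : m ≤ R.k)
    (hn : R.k ≤ n) : a R ≤ ancestorSum (ancestorSupIncrement m n a) R := by
  obtain ⟨x, hx⟩ := R.toSet_nonempty
  calc a R ≤ ancestorSupUpTo n a R := le_ancestorSupUpTo a hn
    _ = ∑ k ∈ Finset.Ico R.k (n + 1), ancestorSupIncrement m n a (containing k x) := by
        rw [sum_ancestorSupIncrement_containing a hm (by omega), ← eq_containing_of_mem hx]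
    _ ≤ ancestorSum (ancestorSupIncrement m n a) R :=
        sum_containing_le_ancestorSum _ hx _ fun k hk => (Finset.mem_Ico.1 hk).1

theorem indicatorSum_ancestorSupIncrement_le {m : ℤ} (hmn : m ≤ n) (x : Fin d → ℝ) :
    indicatorSum (ancestorSupIncrement m n a) x ≤ indicatorSup a x := by
  have hzero : ∀ k ∉ Finset.Ico m (n + 1),
      ancestorSupIncrement m n a (containing k x) = 0 := by
    intro k hk
    rcases lt_or_ge k m with hkm | hmk
    · exact if_neg hkm.not_ge
    · have hnk : n < k := by simp only [Finset.mem_Ico] at hk; omega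
      rw [ancestorSupIncrement, parent_containing, ancestorSupUpTo_of_lt a hnk,
        ancestorSupUpTo_of_lt a (hnk.trans (lt_add_one k)), tsub_zero, ite_self]
  rw [indicatorSum_eq_tsum_containing, tsum_eq_sum hzero,
    sum_ancestorSupIncrement_containing a le_rfl (by omega)]
  exact ancestorSupUpTo_le_indicatorSup a (mem_containing m x)

end ancestorSupUpTo

section Testing

variable (lam : DyadicCube d → ℝ≥0∞) (C : ℝ≥0∞) (p q : ℝ) (σ ω : Measure (Fin d → ℝ))

def SupTesting : Prop :=
  ∀ a : DyadicCube d → ℝ≥0∞,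
    eLpNorm' (indicatorSum fun Q => lam Q * a Q) q ω ≤ C * eLpNorm' (indicatorSup a) p σ

def SumTesting : Prop :=
  ∀ b : DyadicCube d → ℝ≥0∞,
    eLpNorm' (indicatorSum fun R => lam R * ancestorSum b R) q ω
      ≤ C * eLpNorm' (indicatorSum b) p σ

variable {lam C p q σ ω}

theorem supTesting_iff_forall_nnreal (hp : 0 < p) (hq : 0 < q) :
    SupTesting lam C p q σ ω ↔ ∀ a : DyadicCube d → ℝ≥0,
      eLpNorm' (indicatorSum fun Q => lam Q * a Q) q ω
        ≤ C * eLpNorm' (indicatorSup fun Q => (a Q : ℝ≥0∞)) p σ :=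
  ⟨fun h a => h fun Q => a Q, fun h => le_of_forall_coe_le
    (Φ := fun a => eLpNorm' (indicatorSum fun Q => lam Q * a Q) q ω)
    (Ψ := fun a => C * eLpNorm' (indicatorSup a) p σ)
    (fun _ hc => (eLpNorm'_indicatorSum_mul_iSup hq ω lam hc).le)
    (fun _ _ h => mul_le_mul_right
      (eLpNorm'_mono_enorm_ae hp.le (ae_of_all _ (indicatorSup_mono h))) C) h⟩

theorem sumTesting_iff_forall_nnreal (hp : 0 < p) (hq : 0 < q) :
    SumTesting lam C p q σ ω ↔ ∀ b : DyadicCube d → ℝ≥0,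
      eLpNorm' (indicatorSum fun R => lam R * ancestorSum (fun Q => (b Q : ℝ≥0∞)) R) q ω
        ≤ C * eLpNorm' (indicatorSum fun Q => (b Q : ℝ≥0∞)) p σ :=
  ⟨fun h b => h fun Q => b Q, fun h => le_of_forall_coe_le
    (Φ := fun b => eLpNorm' (indicatorSum fun R => lam R * ancestorSum b R) q ω)
    (Ψ := fun b => C * eLpNorm' (indicatorSum b) p σ)
    (fun c hc => by
      simp only [ancestorSum_iSup hc]
      exact (eLpNorm'_indicatorSum_mul_iSup hq ω lam fun m n h => ancestorSum_mono (hc h)).le)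
    (fun _ _ h => mul_le_mul_right
      (eLpNorm'_mono_enorm_ae hp.le (ae_of_all _ (indicatorSum_mono h))) C) h⟩

theorem SupTesting.sumTesting (hp : 0 < p) (h : SupTesting lam C p q σ ω) :
    SumTesting lam C p q σ ω := fun b =>
  (h (ancestorSum b)).trans (mul_le_mul_right
    (eLpNorm'_mono_enorm_ae hp.le (ae_of_all _ (indicatorSup_ancestorSum_le b))) C)

theorem SumTesting.supTesting (hp : 0 < p) (hq : 0 < q) (h : SumTesting lam C p q σ ω) :
    SupTesting lam C p q σ ω := by
  intro a
  set c : ℕ → DyadicCube d → ℝ≥0∞ := fun n => {Q | Q.k.natAbs ≤ n}.indicator a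
  have hc : Monotone c := fun m n hmn =>
    Set.indicator_le_indicator_of_subset (fun _ hQ => hQ.trans hmn) fun _ => zero_le
  have hca : ⨆ n, c n = a := by
    ext Q
    rw [iSup_apply]
    exact le_antisymm (iSup_le fun n => Set.indicator_le_self _ _ Q)
      (le_iSup_of_le Q.k.natAbs (by simp [c]))
  calc eLpNorm' (indicatorSum fun Q => lam Q * a Q) q ω
      = eLpNorm' (indicatorSum fun Q => lam Q * (⨆ n, c n) Q) q ω := by rw [hca]
    _ = ⨆ n, eLpNorm' (indicatorSum fun Q => lam Q * c n Q) q ω :=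
        eLpNorm'_indicatorSum_mul_iSup hq ω lam hc
    _ ≤ C * eLpNorm' (indicatorSup a) p σ := iSup_le fun n => by
        set b := ancestorSupIncrement (-n) n a
        have hcb : ∀ R, c n R ≤ ancestorSum b R := fun R => Set.indicator_apply_le'
          (fun (hR : R.k.natAbs ≤ n) => le_ancestorSum_ancestorSupIncrement a _ (by omega)
            (by omega)) fun _ => zero_le
        calc eLpNorm' (indicatorSum fun Q => lam Q * c n Q) q ω
            ≤ eLpNorm' (indicatorSum fun R => lam R * ancestorSum b R) q ω :=
              eLpNorm'_mono_enorm_ae hq.le (ae_of_all _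
                (indicatorSum_mono fun R => mul_le_mul_right (hcb R) _))
          _ ≤ C * eLpNorm' (indicatorSum b) p σ := h b
          _ ≤ C * eLpNorm' (indicatorSup a) p σ := mul_le_mul_right
              (eLpNorm'_mono_enorm_ae hp.le (ae_of_all _
                (indicatorSum_ancestorSupIncrement_le a (by omega)))) C

end Testing

end DyadicCube

theorem stmt6_general (d : ℕ) (p q : ℝ) (hp : 0 < p) (hq : 0 < q)
    (σ ω : Measure (Fin d → ℝ))
    (lam : DyadicCube d → ℝ≥0) (C : ℝ≥0∞) :
    (∀ a : DyadicCube d → ℝ≥0,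
        (∫⁻ x, (∑' Q : DyadicCube d,
            Q.toSet.indicator (fun _ => (lam Q : ℝ≥0∞) * a Q) x) ^ q ∂ω) ^ (1/q)
          ≤ C * (∫⁻ x, (⨆ Q : DyadicCube d,
              Q.toSet.indicator (fun _ => (a Q : ℝ≥0∞)) x) ^ p ∂σ) ^ (1/p)) ↔
    (∀ b : DyadicCube d → ℝ≥0,
        (∫⁻ x, (∑' Q : DyadicCube d,
            Set.indicator Q.toSet
              (fun y => (∑' R : {R : DyadicCube d // R.toSet ⊆ Q.toSet},
                  R.1.toSet.indicator (fun _ => (lam R.1 : ℝ≥0∞)) y) * b Q) x) ^ q ∂ω) ^ (1/q)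
          ≤ C * (∫⁻ x, (∑' Q : DyadicCube d,
              Q.toSet.indicator (fun _ => (b Q : ℝ≥0∞)) x) ^ p ∂σ) ^ (1/p)) := by
  have key : DyadicCube.SupTesting (fun Q => (lam Q : ℝ≥0∞)) C p q σ ω
      ↔ DyadicCube.SumTesting (fun Q => (lam Q : ℝ≥0∞)) C p q σ ω :=
    ⟨fun h => h.sumTesting hp, fun h => h.supTesting hp hq⟩
  rw [DyadicCube.supTesting_iff_forall_nnreal hp hq,
    DyadicCube.sumTesting_iff_forall_nnreal hp hq] at key
  simp only [DyadicCube.tsum_indicator_tsum_indicator_mul (fun Q => (lam Q : ℝ≥0∞))]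
  exact key

/-- sup-testing with `{λ_Q}` is equivalent, with the same constant, to
sum-testing with the localized sums `ρ_Q := ∑_{R ⊆ Q} λ_R 1_R`. -/
theorem stmt6 (d : ℕ) (p q : ℝ) (hp : 0 < p) (hq : 0 < q)
    (σ ω : Measure (Fin d → ℝ))
    [IsLocallyFiniteMeasure σ] [IsLocallyFiniteMeasure ω]
    (lam : DyadicCube d → ℝ≥0) (C : ℝ≥0∞) :
    (∀ a : DyadicCube d → ℝ≥0,
        (∫⁻ x, (∑' Q : DyadicCube d,
            Q.toSet.indicator (fun _ => (lam Q : ℝ≥0∞) * a Q) x) ^ q ∂ω) ^ (1/q)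
          ≤ C * (∫⁻ x, (⨆ Q : DyadicCube d,
              Q.toSet.indicator (fun _ => (a Q : ℝ≥0∞)) x) ^ p ∂σ) ^ (1/p)) ↔
    (∀ b : DyadicCube d → ℝ≥0,
        (∫⁻ x, (∑' Q : DyadicCube d,
            Set.indicator Q.toSet
              (fun y => (∑' R : {R : DyadicCube d // R.toSet ⊆ Q.toSet},
                  R.1.toSet.indicator (fun _ => (lam R.1 : ℝ≥0∞)) y) * b Q) x) ^ q ∂ω) ^ (1/q)
          ≤ C * (∫⁻ x, (∑' Q : DyadicCube d,
              Q.toSet.indicator (fun _ => (b Q : ℝ≥0∞)) x) ^ p ∂σ) ^ (1/p)) :=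
  stmt6_general d p q hp hq σ ω lam C
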